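/- For all natural numbers n and m with 0 < m < n, let B = C(n,m). For all indices i, j with 0 ≤ i, j ≤ B − 1, the Hamming distance between the code words C_{n,m}[i] and C_{n,m}[j] is at most 2·d_B(i, j); consequently, the two subsets of {1,…,n} whose indicator strings are C_{n,m}[i] and C_{n,m}[j] (each of size m) have at least m − d_B(i, j) common elements. -/

import Mathlib

/-- The Gray-style code `C_{n,m}`: a list of binary strings (lists of Booleans,
`true` = 1, `false` = 0).  `C_{0,0}` is the one-element list containing the empty
string, `C_{n,0} = [0^n]`, `C_{n,n} = [1^n]` for `n > 0`, and for `0 < m < n`,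
`C_{n,m}` is the concatenation of the list obtained by prepending `0` to every
string of `C_{n-1,m}` with the reverse of the list obtained by prepending `1` to
every string of `C_{n-1,m-1}`. -/
def grayCode : ℕ → ℕ → List (List Bool)
  | 0, _ => [[]]
  | n + 1, 0 => [List.replicate (n + 1) false]
  | n + 1, m + 1 =>
    if m + 1 = n + 1 then [List.replicate (n + 1) true]
    else (grayCode n (m + 1)).map (List.cons false) ++
      ((grayCode n m).map (List.cons true)).reverse


/-- The Hamming distance between two (equal-length) binary strings: the number of
positions at which they differ. -/
def listHammingDist : List Bool → List Bool → ℕ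
  | a :: as, b :: bs => (if a = b then 0 else 1) + listHammingDist as bs
  | _, _ => 0

/-- The cyclic distance between `x, y ∈ {0, …, q-1}`:
`d_q(x, y) = min (|x - y|, q - |x - y|)` (here on natural numbers, with
`Nat.dist x y = |x - y|`). -/
def natCyclicDist (q x y : ℕ) : ℕ := min (Nat.dist x y) (q - Nat.dist x y)

/-- The number of positions at which both binary strings carry a `1`, i.e. the
number of common elements of the two subsets of which they are indicator
strings. -/
def commonOnes : List Bool → List Bool → ℕ
  | a :: as, b :: bs => (if a = true ∧ b = true then 1 else 0) + commonOnes as bs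
  | _, _ => 0

/-! Consecutive words of `C_{n,m}` differ in at most two positions, and so do its last word
`1 0^(n-m) 1^(m-1)` and its first word `0^(n-m) 1^m`. The list is therefore a closed walk of
step at most `2` in the Hamming metric, so words `d` steps apart around the cycle are at
Hamming distance at most `2 d`. Two words with `m` ones each at Hamming distance `h` share
exactly `m - h / 2` ones. -/

section CyclicChain

variable {α : Type*} (d : α → α → ℕ) {k : ℕ} {L : List α}

theorem dist_getElem_le_of_isChain (hself : ∀ a, d a a = 0)
    (htri : ∀ a ∈ L, ∀ b ∈ L, ∀ c ∈ L, d a c ≤ d a b + d b c)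
    (hL : L.IsChain fun a b => d a b ≤ k) {i j : ℕ} (hij : i ≤ j) (hj : j < L.length) :
    d L[i] L[j] ≤ k * (j - i) := by
  induction j, hij using Nat.le_induction with
  | base => simp [hself]
  | succ j hij ih =>
    calc d L[i] L[j + 1] ≤ d L[i] L[j] + d L[j] L[j + 1] :=
          htri _ (L.getElem_mem _) _ (L.getElem_mem _) _ (L.getElem_mem _)
      _ ≤ k * (j - i) + k := add_le_add (ih (by omega)) (List.isChain_iff_getElem.mp hL j hj)
      _ = k * (j + 1 - i) := by rw [Nat.sub_add_comm hij, Nat.mul_succ]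

theorem dist_getElem_le_mul_natCyclicDist (hself : ∀ a, d a a = 0) (hsymm : ∀ a b, d a b = d b a)
    (htri : ∀ a ∈ L, ∀ b ∈ L, ∀ c ∈ L, d a c ≤ d a b + d b c)
    (hL : L.IsChain fun a b => d a b ≤ k) (hclose : ∀ a ∈ L.getLast?, ∀ b ∈ L.head?, d a b ≤ k)
    {i j : ℕ} (hi : i < L.length) (hj : j < L.length) :
    d L[i] L[j] ≤ k * natCyclicDist L.length i j := by
  wlog hij : i ≤ j generalizing i j
  · rw [hsymm, natCyclicDist, Nat.dist_comm]
    exact this hj hi (by omega)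
  have tri : ∀ {a b c : ℕ} (ha : a < L.length) (hb : b < L.length) (hc : c < L.length),
      d L[a] L[c] ≤ d L[a] L[b] + d L[b] L[c] := fun ha hb hc =>
    htri _ (L.getElem_mem ha) _ (L.getElem_mem hb) _ (L.getElem_mem hc)
  have hlast : d L[L.length - 1] L[0] ≤ k :=
    hclose _ (by simp [List.getLast?_eq_getElem?]) _ (by simp [List.head?_eq_getElem?])
  have hforward := dist_getElem_le_of_isChain d hself htri hL hij hj
  have hfirst : d L[0] L[i] ≤ k * i := by
    simpa using dist_getElem_le_of_isChain d hself htri hL (Nat.zero_le i) hi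
  have htail := dist_getElem_le_of_isChain d hself htri hL (Nat.le_sub_one_of_lt hj) (by omega)
  have hbackward : d L[i] L[j] ≤ k * (L.length - (j - i)) :=
    calc d L[i] L[j] ≤ d L[0] L[i] + (d L[L.length - 1] L[0] + d L[j] L[L.length - 1]) := by
          rw [hsymm L[0], hsymm L[L.length - 1] L[0], hsymm L[j]]
          exact (tri (b := 0) hi (by omega) hj).trans
            (Nat.add_le_add_left (tri (b := L.length - 1) (by omega) (by omega) hj) _)
      _ ≤ k * i + (k + k * (L.length - 1 - j)) := by gcongr
      _ = k * (L.length - (j - i)) := by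
          rw [show L.length - (j - i) = i + (1 + (L.length - 1 - j)) by omega]; ring
  rw [natCyclicDist, Nat.dist_eq_sub_of_le hij, ← Nat.mul_min_mul_left]
  exact le_min hforward hbackward

end CyclicChain

@[simp]
theorem listHammingDist_cons_cons (a b : Bool) (as bs : List Bool) :
    listHammingDist (a :: as) (b :: bs) = (if a = b then 0 else 1) + listHammingDist as bs := rfl

@[simp]
theorem listHammingDist_self (a : List Bool) : listHammingDist a a = 0 := by
  induction a <;> simp_all [listHammingDist]

theorem listHammingDist_comm (a b : List Bool) : listHammingDist a b = listHammingDist b a := by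
  induction a generalizing b with
  | nil => cases b <;> rfl
  | cons x as ih => cases b <;> simp [listHammingDist, ih, eq_comm]

@[simp]
theorem listHammingDist_append_left (s u v : List Bool) :
    listHammingDist (s ++ u) (s ++ v) = listHammingDist u v := by
  induction s <;> simp_all

theorem listHammingDist_triangle {a b : List Bool} (c : List Bool) (h : a.length = b.length) :
    listHammingDist a c ≤ listHammingDist a b + listHammingDist b c := by
  induction a generalizing b c with
  | nil => simp [listHammingDist]
  | cons x as ih =>
    obtain _ | ⟨y, bs⟩ := b
    · simp at h
    obtain _ | ⟨z, cs⟩ := c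
    · simp [listHammingDist]
    have := ih cs (by simpa using h)
    cases x <;> cases y <;> cases z <;> simp <;> omega

theorem listHammingDist_add_two_mul_commonOnes {a b : List Bool} (h : a.length = b.length) :
    listHammingDist a b + 2 * commonOnes a b = a.count true + b.count true := by
  induction a generalizing b with
  | nil => cases b <;> simp_all [commonOnes]
  | cons x as ih =>
    obtain _ | ⟨y, bs⟩ := b
    · simp at h
    have := ih (b := bs) (by simpa using h)
    cases x <;> cases y <;> simp [commonOnes] <;> omega

section GrayCode

open List

def grayFirst (n m : ℕ) : List Bool := replicate (n - m) false ++ replicate m true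

theorem grayFirst_succ_left {n m : ℕ} (h : m ≤ n) : grayFirst (n + 1) m = false :: grayFirst n m := by
  rw [grayFirst, Nat.sub_add_comm h, replicate_succ, cons_append, grayFirst]

theorem grayFirst_self (n : ℕ) : grayFirst n n = replicate n true := by
  simp [grayFirst]

theorem listHammingDist_grayFirst_succ {n m : ℕ} (h : m < n) :
    listHammingDist (grayFirst n (m + 1)) (grayFirst n m) = 1 := by
  have e : n - m = n - (m + 1) + 1 := by omega
  rw [grayFirst, grayFirst, e, replicate_succ' (n := n - (m + 1)), append_assoc, singleton_append,
    replicate_succ (n := m)]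
  simp

theorem grayCode_zero_right (n : ℕ) : grayCode n 0 = [replicate n false] := by
  cases n <;> rfl

theorem grayCode_self (n : ℕ) : grayCode n n = [replicate n true] := by
  cases n <;> simp [grayCode]

theorem grayCode_succ_succ {n m : ℕ} (h : m < n) :
    grayCode (n + 1) (m + 1) =
      (grayCode n (m + 1)).map (cons false) ++ ((grayCode n m).map (cons true)).reverse := by
  rw [grayCode, if_neg (by omega)]

theorem length_grayCode {n m : ℕ} (h : m ≤ n) : (grayCode n m).length = n.choose m := by
  induction n, m using grayCode.induct with
  | case1 m => rw [Nat.le_zero.mp h]; rfl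
  | case2 n => rfl
  | case3 n m heq => simp [Nat.succ_injective heq, grayCode_self]
  | case4 n m hne ih₁ ih₂ =>
    rw [grayCode_succ_succ (by omega), Nat.choose_succ_succ]
    simp [ih₁ (by omega), ih₂ (by omega), add_comm]

theorem length_of_mem_grayCode {n m : ℕ} {w : List Bool} (hw : w ∈ grayCode n m) :
    w.length = n := by
  induction n, m using grayCode.induct generalizing w with
  | case1 m => simp_all [grayCode]
  | case2 n => simp_all [grayCode]
  | case3 n m heq => simp_all [grayCode]
  | case4 n m hne ih₁ ih₂ =>
    simp only [grayCode, hne, if_false, mem_append, mem_reverse, mem_map] at hw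
    obtain ⟨v, hv, rfl⟩ | ⟨v, hv, rfl⟩ := hw <;> simp [ih₁, ih₂, hv]

theorem count_true_of_mem_grayCode {n m : ℕ} (h : m ≤ n) {w : List Bool}
    (hw : w ∈ grayCode n m) : w.count true = m := by
  induction n, m using grayCode.induct generalizing w with
  | case1 m => simp_all [grayCode]
  | case2 n => simp_all [grayCode, count_replicate]
  | case3 n m heq => simp_all [grayCode]
  | case4 n m hne ih₁ ih₂ =>
    simp only [grayCode, hne, if_false, mem_append, mem_reverse, mem_map] at hw
    obtain ⟨v, hv, rfl⟩ | ⟨v, hv, rfl⟩ := hw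
    · simp [ih₁ (by omega) hv]
    · simp [ih₂ (by omega) hv]

theorem head?_grayCode {n m : ℕ} (h : m ≤ n) : (grayCode n m).head? = some (grayFirst n m) := by
  induction n, m using grayCode.induct with
  | case1 m => simp [grayCode, grayFirst, Nat.le_zero.mp h]
  | case2 n => simp [grayCode, grayFirst]
  | case3 n m heq => simp [Nat.succ_injective heq, grayCode_self, grayFirst_self]
  | case4 n m hne ih₁ ih₂ =>
    rw [grayCode_succ_succ (by omega), head?_append, head?_map, ih₁ (by omega),
      grayFirst_succ_left (by omega)]
    rfl

theorem getLast?_grayCode_succ_succ {n m : ℕ} (h : m ≤ n) :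
    (grayCode (n + 1) (m + 1)).getLast? = some (true :: grayFirst n m) := by
  obtain rfl | hlt := h.eq_or_lt
  · simp [grayCode_self, grayFirst_self, replicate_succ]
  · rw [grayCode_succ_succ hlt, getLast?_append, getLast?_reverse, head?_map, head?_grayCode h]
    rfl

theorem listHammingDist_getLast?_grayCode_le {n m : ℕ} (h : m < n) :
    ∀ a ∈ (grayCode n (m + 1)).getLast?, ∀ b ∈ (grayCode n m).getLast?,
      listHammingDist a b ≤ 1 := by
  obtain ⟨n, rfl⟩ : ∃ k, n = k + 1 := ⟨n - 1, by omega⟩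
  rw [getLast?_grayCode_succ_succ (by omega)]
  cases m with
  | zero => simp [grayCode_zero_right, grayFirst, replicate_succ]
  | succ m =>
    rw [getLast?_grayCode_succ_succ (by omega)]
    simp [listHammingDist_grayFirst_succ (by omega : m < n)]

theorem isChain_grayCode {n m : ℕ} (h : m ≤ n) :
    (grayCode n m).IsChain fun a b => listHammingDist a b ≤ 2 := by
  induction n, m using grayCode.induct with
  | case1 m => simp [grayCode]
  | case2 n => simp [grayCode]
  | case3 n m heq => simp [grayCode, heq]
  | case4 n m hne ih₁ ih₂ =>
    rw [grayCode_succ_succ (by omega), isChain_append, isChain_map, isChain_reverse, isChain_map]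
    refine ⟨(ih₁ (by omega)).imp fun a b hab => by simpa using hab,
      (ih₂ (by omega)).imp fun a b hab => by simpa [listHammingDist_comm b] using hab, ?_⟩
    simp only [getLast?_map, head?_reverse, Option.mem_map, forall_exists_index, and_imp,
      forall_apply_eq_imp_iff₂]
    intro a ha b hb
    have := listHammingDist_getLast?_grayCode_le (by omega) a ha b hb
    rw [listHammingDist_cons_cons, if_neg Bool.false_ne_true]
    omega

theorem listHammingDist_getLast?_head?_grayCode_le {n m : ℕ} (h : m ≤ n) :
    ∀ a ∈ (grayCode n m).getLast?, ∀ b ∈ (grayCode n m).head?, listHammingDist a b ≤ 2 := by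
  cases m with
  | zero => simp [grayCode_zero_right]
  | succ m =>
    obtain ⟨n, rfl⟩ : ∃ k, n = k + 1 := ⟨n - 1, by omega⟩
    rw [head?_grayCode h, getLast?_grayCode_succ_succ (by omega)]
    obtain rfl | hlt := (Nat.le_of_lt_succ h).eq_or_lt
    · simp [grayFirst_self, replicate_succ]
    · simp [grayFirst_succ_left hlt, listHammingDist_comm (grayFirst _ m),
        listHammingDist_grayFirst_succ hlt]

end GrayCode

theorem grayCode_cyclic_hamming_bound_general (n m : ℕ) (hmn : m < n)
    (i j : ℕ) (hi : i ≤ n.choose m - 1) (hj : j ≤ n.choose m - 1) :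
    listHammingDist ((grayCode n m).getD i []) ((grayCode n m).getD j [])
        ≤ 2 * natCyclicDist (n.choose m) i j ∧
    (m : ℤ) - (natCyclicDist (n.choose m) i j : ℤ)
        ≤ (commonOnes ((grayCode n m).getD i []) ((grayCode n m).getD j []) : ℤ) := by
  set L := grayCode n m
  have hlen : L.length = n.choose m := length_grayCode hmn.le
  have hpos := Nat.choose_pos hmn.le
  have hi' : i < L.length := by omega
  have hj' : j < L.length := by omega
  have hwords : ∀ w ∈ L, w.length = n := fun _ => length_of_mem_grayCode
  rw [List.getD_eq_getElem _ _ hi', List.getD_eq_getElem _ _ hj', ← hlen]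
  have hham : listHammingDist L[i] L[j] ≤ 2 * natCyclicDist L.length i j :=
    dist_getElem_le_mul_natCyclicDist listHammingDist listHammingDist_self listHammingDist_comm
      (fun a ha b hb c _ => listHammingDist_triangle c ((hwords a ha).trans (hwords b hb).symm))
      (isChain_grayCode hmn.le) (listHammingDist_getLast?_head?_grayCode_le hmn.le) hi' hj'
  have hcommon := listHammingDist_add_two_mul_commonOnes
    ((hwords _ (L.getElem_mem hi')).trans (hwords _ (L.getElem_mem hj')).symm)
  rw [count_true_of_mem_grayCode hmn.le (L.getElem_mem hi'),
    count_true_of_mem_grayCode hmn.le (L.getElem_mem hj')] at hcommon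
  exact ⟨hham, by omega⟩

/-- For all natural numbers `n` and `m` with `0 < m < n`, let `B = C(n,m)`.  For
all indices `i, j ≤ B - 1`, the Hamming distance between the code words
`C_{n,m}[i]` and `C_{n,m}[j]` is at most `2 · d_B(i, j)`; consequently, the two
subsets of `{1,…,n}` whose indicator strings are `C_{n,m}[i]` and `C_{n,m}[j]`
(each of size `m`) have at least `m - d_B(i, j)` common elements. -/
theorem grayCode_cyclic_hamming_bound (n m : ℕ) (hm : 0 < m) (hmn : m < n)
    (i j : ℕ) (hi : i ≤ n.choose m - 1) (hj : j ≤ n.choose m - 1) :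
    listHammingDist ((grayCode n m).getD i []) ((grayCode n m).getD j [])
        ≤ 2 * natCyclicDist (n.choose m) i j ∧
    (m : ℤ) - (natCyclicDist (n.choose m) i j : ℤ)
        ≤ (commonOnes ((grayCode n m).getD i []) ((grayCode n m).getD j []) : ℤ) :=
  grayCode_cyclic_hamming_bound_general n m hmn i j hi hj
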